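/- Let (X,κ) ∧ (X',κ) be a wedge with X ∩ X' = {x₀} and let (Y,λ) ∧ (Y',λ) be a wedge with Y ∩ Y' = {y₀}. Let F : (X,κ) ⊸ (Y,λ) and F' : (X',κ) ⊸ (Y',λ) be multivalued functions with F(x₀) = {y₀} = F'(x₀). If F and F' are both connectivity preserving, then F ∧ F' : X ∧ X' ⊸ Y ∧ Y' is connectivity preserving. -/

import Mathlib

/-- `a ⩦ b` : `a = b` or `a`, `b` are adjacent. -/
def AdjEq {α : Type*} (adj : α → α → Prop) (a b : α) : Prop := a = b ∨ adj a b

/-- `A` and `B` are adjacent sets: some point of `A` is equal or adjacent to some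
point of `B`. -/
def AdjSets {α : Type*} (adj : α → α → Prop) (A B : Set α) : Prop :=
  ∃ a ∈ A, ∃ b ∈ B, AdjEq adj a b

/-- A subset `A` of a digital image is connected: any two of its points are joined by a
path of consecutively adjacent points lying in `A`. -/
def ConnectedIn {α : Type*} (adj : α → α → Prop) (A : Set α) : Prop :=
  ∀ a ∈ A, ∀ b ∈ A, ∃ (m : ℕ) (y : ℕ → α), y 0 = a ∧ y m = b ∧
    (∀ i ≤ m, y i ∈ A) ∧ ∀ i < m, adj (y i) (y (i + 1))

/-- Image of a set under a multivalued function: `F(A) = ⋃_{x ∈ A} F(x)`. -/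
def mImage {α β : Type*} (F : α → Set β) (A : Set α) : Set β := ⋃ x ∈ A, F x

/-- Weak continuity of a multivalued function. -/
def WeaklyContinuous {α β : Type*} (adjX : α → α → Prop) (adjY : β → β → Prop)
    (F : α → Set β) : Prop :=
  ∀ x x', adjX x x' → AdjSets adjY (F x) (F x')

/-- Strong continuity of a multivalued function. -/
def StronglyContinuous {α β : Type*} (adjX : α → α → Prop) (adjY : β → β → Prop)
    (F : α → Set β) : Prop :=
  ∀ x x', adjX x x' →
    (∀ y ∈ F x, ∃ y' ∈ F x', AdjEq adjY y y') ∧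
    (∀ y' ∈ F x', ∃ y ∈ F x, AdjEq adjY y y')

/-- A multivalued function is connectivity preserving if the image of each connected
set is connected. -/
def ConnPreserving {α β : Type*} (adjX : α → α → Prop) (adjY : β → β → Prop)
    (F : α → Set β) : Prop :=
  ∀ A : Set α, ConnectedIn adjX A → ConnectedIn adjY (mImage F A)

/-- A multivalued function is a surjection if every point of the codomain lies in some
point image. -/
def MSurjective {α β : Type*} (F : α → Set β) : Prop := ∀ y, ∃ x, y ∈ F x

/-!
Both `A ∩ X` and `A ∩ X'` of a connected set `A` in the wedge are connected: retracting `X'` onto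
the wedge point maps paths in `A` to paths in `A ∩ X`, up to repeated points. If `x₀ ∈ A`, the image
`(F ∧ F')(A) = F(A ∩ X) ∪ F'(A ∩ X')` is then a union of two connected sets sharing `y₀`. If
`x₀ ∉ A`, no path in `A` can cross from one summand to the other, so `A` lies in a single summand.
-/

open Relation

section

variable {α β : Type*}

def adjWithin (adj : α → α → Prop) (A : Set α) (u v : α) : Prop :=
  u ∈ A ∧ v ∈ A ∧ adj u v

lemma adjWithin_mono {adj : α → α → Prop} {A B : Set α} (h : A ⊆ B) :
    adjWithin adj A ≤ adjWithin adj B :=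
  fun _ _ ⟨hu, hv, huv⟩ => ⟨h hu, h hv, huv⟩

lemma exists_path_of_reflTransGen {adj : α → α → Prop} {A : Set α} {a b : α} (hb : b ∈ A)
    (h : ReflTransGen (adjWithin adj A) a b) :
    ∃ (m : ℕ) (y : ℕ → α), y 0 = a ∧ y m = b ∧
      (∀ i ≤ m, y i ∈ A) ∧ ∀ i < m, adj (y i) (y (i + 1)) := by
  induction h using ReflTransGen.head_induction_on with
  | refl => exact ⟨0, fun _ => b, rfl, rfl, fun _ _ => hb, fun _ h => absurd h (Nat.not_lt_zero _)⟩
  | @head a c hac _ ih =>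
    obtain ⟨m, y, hy0, hym, hyA, hyadj⟩ := ih
    refine ⟨m + 1, fun i => Nat.casesOn i a y, rfl, hym, ?_, ?_⟩
    · rintro (_ | i) hi
      exacts [hac.1, hyA i (Nat.le_of_succ_le_succ hi)]
    · rintro (_ | i) hi
      exacts [show adj a (y 0) from hy0 ▸ hac.2.2, hyadj i (Nat.lt_of_succ_lt_succ hi)]

lemma connectedIn_iff_reflTransGen {adj : α → α → Prop} {A : Set α} :
    ConnectedIn adj A ↔ ∀ a ∈ A, ∀ b ∈ A, ReflTransGen (adjWithin adj A) a b := by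
  refine ⟨fun h a ha b hb => ?_, fun h a ha b hb => exists_path_of_reflTransGen hb (h a ha b hb)⟩
  obtain ⟨m, y, rfl, rfl, hyA, hyadj⟩ := h a ha b hb
  have : ReflTransGen (fun i j => adjWithin adj A (y i) (y j)) 0 m :=
    reflTransGen_of_succ_of_le _ (fun i hi => by
      rw [Order.succ_eq_add_one]
      exact ⟨hyA i hi.2.le, hyA (i + 1) hi.2, hyadj i hi.2⟩) (Nat.zero_le m)
  exact this.lift y fun _ _ h => h

lemma ConnectedIn.image {adj : α → α → Prop} {adj' : β → β → Prop} {A : Set α} {f : α → β}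
    (hA : ConnectedIn adj A) (hf : ∀ u ∈ A, ∀ v ∈ A, adj u v → AdjEq adj' (f u) (f v)) :
    ConnectedIn adj' (f '' A) := by
  rw [connectedIn_iff_reflTransGen] at hA ⊢
  rintro _ ⟨a, ha, rfl⟩ _ ⟨b, hb, rfl⟩
  refine (hA a ha b hb).lift' f fun u v ⟨hu, hv, huv⟩ => show ReflTransGen _ (f u) (f v) from ?_
  rcases hf u hu v hv huv with heq | hadj
  · exact heq ▸ ReflTransGen.refl
  · exact ReflTransGen.single ⟨Set.mem_image_of_mem f hu, Set.mem_image_of_mem f hv, hadj⟩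

lemma ConnectedIn.union {adj : α → α → Prop} {A B : Set α} {c : α}
    (hA : ConnectedIn adj A) (hB : ConnectedIn adj B) (hcA : c ∈ A) (hcB : c ∈ B) :
    ConnectedIn adj (A ∪ B) := by
  rw [connectedIn_iff_reflTransGen] at hA hB ⊢
  have lift {S : Set α} (hS : S ⊆ A ∪ B) {a b : α} (h : ReflTransGen (adjWithin adj S) a b) :
      ReflTransGen (adjWithin adj (A ∪ B)) a b :=
    ReflTransGen.mono (adjWithin_mono hS) a b h
  have through_c : ∀ a ∈ A ∪ B, ReflTransGen (adjWithin adj (A ∪ B)) a c ∧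
      ReflTransGen (adjWithin adj (A ∪ B)) c a := by
    rintro a (ha | ha)
    · exact ⟨lift Set.subset_union_left (hA a ha c hcA), lift Set.subset_union_left (hA c hcA a ha)⟩
    · exact ⟨lift Set.subset_union_right (hB a ha c hcB),
        lift Set.subset_union_right (hB c hcB a ha)⟩
  exact fun a ha b hb => (through_c a ha).1.trans (through_c b hb).2

lemma Relation.ReflTransGen.exists_exit {r : α → α → Prop} {X : Set α} {a b : α}
    (h : ReflTransGen r a b) (ha : a ∈ X) (hb : b ∉ X) : ∃ u ∈ X, ∃ v ∉ X, r u v := by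
  induction h with
  | refl => exact absurd ha hb
  | @tail c d _ hcd ih =>
    by_cases hc : c ∈ X
    · exact ⟨c, hc, d, hb, hcd⟩
    · exact ih hc

lemma mImage_congr {F G : α → Set β} {A : Set α} (h : ∀ a ∈ A, F a = G a) :
    mImage F A = mImage G A :=
  Set.iUnion₂_congr h

lemma mImage_eq_union {F G H : α → Set β} {X X' : Set α} (hXX' : X ∪ X' = Set.univ)
    (hF : ∀ a ∈ X, H a = F a) (hG : ∀ a ∈ X', H a = G a) (A : Set α) :
    mImage H A = mImage F (A ∩ X) ∪ mImage G (A ∩ X') := by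
  rw [← mImage_congr (fun a ha => hF a ha.2), ← mImage_congr (fun a ha => hG a ha.2)]
  simp only [mImage, ← Set.biUnion_union, ← Set.inter_union_distrib_left, hXX', Set.inter_univ]

def ExitsOnlyAt (adj : α → α → Prop) (X : Set α) (x₀ : α) : Prop :=
  ∀ a ∈ X, ∀ b ∉ X, adj a b → a = x₀

lemma exitsOnlyAt_of_wedge {adj : α → α → Prop} {X X' : Set α} {x₀ : α}
    (hXX' : X ∪ X' = Set.univ) (hx₀ : x₀ ∈ X)
    (hwedge : ∀ a ∈ X, ∀ b ∈ X', a ≠ x₀ → b ≠ x₀ → ¬ adj a b) : ExitsOnlyAt adj X x₀ :=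
  fun a ha b hb hab => by_contra fun hne =>
    hwedge a ha b ((Set.eq_univ_iff_forall.mp hXX' b).resolve_left hb) hne
      (ne_of_mem_of_not_mem hx₀ hb).symm hab

namespace ExitsOnlyAt

variable {adj : α → α → Prop} {X A : Set α} {x₀ : α}

lemma mem_of_connectedIn (hX : ExitsOnlyAt adj X x₀) (hA : ConnectedIn adj A)
    {a b : α} (ha : a ∈ A) (haX : a ∈ X) (hb : b ∈ A) (hbX : b ∉ X) : x₀ ∈ A := by
  obtain ⟨u, huX, v, hvX, huA, -, huv⟩ :=
    ((connectedIn_iff_reflTransGen.mp hA) a ha b hb).exists_exit haX hbX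
  exact hX u huX v hvX huv ▸ huA

lemma subset_or_subset_compl (hX : ExitsOnlyAt adj X x₀) (hA : ConnectedIn adj A)
    (hx₀ : x₀ ∉ A) : A ⊆ X ∨ A ⊆ Xᶜ := by
  by_contra! h
  simp only [Set.not_subset, Set.mem_compl_iff, not_not] at h
  obtain ⟨⟨b, hbA, hbX⟩, ⟨a, haA, haX⟩⟩ := h
  exact hx₀ (hX.mem_of_connectedIn hA haA haX hbA hbX)

open Classical in
lemma connectedIn_inter (hsymm : Symmetric adj) (hX : ExitsOnlyAt adj X x₀) (hx₀X : x₀ ∈ X)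
    (hA : ConnectedIn adj A) (hx₀A : x₀ ∈ A) : ConnectedIn adj (A ∩ X) := by
  -- only `x₀` is adjacent to `Xᶜ`, so `r` maps adjacent points to equal or adjacent ones
  set r : α → α := fun w => if w ∈ X then w else x₀
  have hr : r '' A = A ∩ X := by
    ext w
    constructor
    · rintro ⟨a, ha, rfl⟩
      by_cases haX : a ∈ X <;> simp [r, haX, ha, hx₀A, hx₀X]
    · exact fun ⟨hw, hwX⟩ => ⟨w, hw, if_pos hwX⟩
  rw [← hr]
  refine hA.image fun u _ v _ huv => ?_
  by_cases hu : u ∈ X <;> by_cases hv : v ∈ X <;> simp only [r, hu, hv, if_true, if_false]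
  · exact Or.inr huv
  · exact Or.inl (hX u hu v hv huv)
  · exact Or.inl (hX v hv u hu (hsymm huv)).symm
  · exact Or.inl rfl

end ExitsOnlyAt

end

theorem wedge_connectivity_preserving_general {W Z : Type*}
    (κ : W → W → Prop) (lam : Z → Z → Prop)
    (hκs : Symmetric κ)
    -- `(W,κ) = (X,κ) ∧ (X',κ)` is a wedge with `X ∩ X' = {x₀}`
    (X X' : Set W) (x₀ : W)
    (hXunion : X ∪ X' = Set.univ) (hXinter : X ∩ X' = {x₀})
    (hXwedge : ∀ a ∈ X, ∀ b ∈ X', a ≠ x₀ → b ≠ x₀ → ¬ κ a b)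
    -- `(Z,λ) = (Y,λ) ∧ (Y',λ)` is a wedge with `Y ∩ Y' = {y₀}`
    (y₀ : Z)
    -- `F : X ⊸ Y` and `G : X' ⊸ Y'` with `F(x₀) = {y₀} = G(x₀)`
    (F G : W → Set Z)
    (hFx₀ : F x₀ = {y₀}) (hGx₀ : G x₀ = {y₀})
    -- `F` and `G` are connectivity preserving
    (hFcp : ∀ A : Set W, A ⊆ X → ConnectedIn κ A → ConnectedIn lam (mImage F A))
    (hGcp : ∀ A : Set W, A ⊆ X' → ConnectedIn κ A → ConnectedIn lam (mImage G A))
    -- `H = F ∧ G` is the wedge function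
    (H : W → Set Z)
    (hHF : ∀ a ∈ X, a ≠ x₀ → H a = F a)
    (hHG : ∀ a ∈ X', a ≠ x₀ → H a = G a)
    (hHx₀ : H x₀ = {y₀}) :
    ConnPreserving κ lam H := by
  obtain ⟨hx₀X, hx₀X'⟩ : x₀ ∈ X ∩ X' := hXinter ▸ Set.mem_singleton x₀
  have hX : ExitsOnlyAt κ X x₀ := exitsOnlyAt_of_wedge hXunion hx₀X hXwedge
  have hX' : ExitsOnlyAt κ X' x₀ := exitsOnlyAt_of_wedge (Set.union_comm X X' ▸ hXunion) hx₀X'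
    fun a ha b hb ha₀ hb₀ hab => hXwedge b hb a ha hb₀ ha₀ (hκs hab)
  have hHF' : ∀ a ∈ X, H a = F a := fun a ha => by
    rcases eq_or_ne a x₀ with rfl | hne
    exacts [hHx₀.trans hFx₀.symm, hHF a ha hne]
  have hHG' : ∀ a ∈ X', H a = G a := fun a ha => by
    rcases eq_or_ne a x₀ with rfl | hne
    exacts [hHx₀.trans hGx₀.symm, hHG a ha hne]
  intro A hA
  by_cases hx₀A : x₀ ∈ A
  · have hy₀F : y₀ ∈ F x₀ := hFx₀ ▸ Set.mem_singleton y₀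
    have hy₀G : y₀ ∈ G x₀ := hGx₀ ▸ Set.mem_singleton y₀
    rw [mImage_eq_union hXunion hHF' hHG' A]
    exact (hFcp _ Set.inter_subset_right (hX.connectedIn_inter hκs hx₀X hA hx₀A)).union
      (hGcp _ Set.inter_subset_right (hX'.connectedIn_inter hκs hx₀X' hA hx₀A))
      (Set.mem_biUnion ⟨hx₀A, hx₀X⟩ hy₀F) (Set.mem_biUnion ⟨hx₀A, hx₀X'⟩ hy₀G)
  · rcases hX.subset_or_subset_compl hA hx₀A with hAX | hAXc
    · rw [mImage_congr fun a ha => hHF' a (hAX ha)]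
      exact hFcp A hAX hA
    · have hAX' : A ⊆ X' := fun a ha =>
        (Set.eq_univ_iff_forall.mp hXunion a).resolve_left (hAXc ha)
      rw [mImage_congr fun a ha => hHG' a (hAX' ha)]
      exact hGcp A hAX' hA

/-- the wedge `F ∧ F'` of connectivity preserving multivalued functions
`F : (X,κ) ⊸ (Y,λ)`, `F' : (X',κ) ⊸ (Y',λ)` with `F(x₀) = {y₀} = F'(x₀)` is
connectivity preserving on the wedge `X ∧ X'`. -/
theorem wedge_connectivity_preserving {W Z : Type*}
    (κ : W → W → Prop) (lam : Z → Z → Prop)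
    (hκs : Symmetric κ) (hκi : Irreflexive κ)
    (hls : Symmetric lam) (hli : Irreflexive lam)
    -- `(W,κ) = (X,κ) ∧ (X',κ)` is a wedge with `X ∩ X' = {x₀}`
    (X X' : Set W) (x₀ : W)
    (hXunion : X ∪ X' = Set.univ) (hXinter : X ∩ X' = {x₀})
    (hXwedge : ∀ a ∈ X, ∀ b ∈ X', a ≠ x₀ → b ≠ x₀ → ¬ κ a b)
    -- `(Z,λ) = (Y,λ) ∧ (Y',λ)` is a wedge with `Y ∩ Y' = {y₀}`
    (Y Y' : Set Z) (y₀ : Z)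
    (hYunion : Y ∪ Y' = Set.univ) (hYinter : Y ∩ Y' = {y₀})
    (hYwedge : ∀ a ∈ Y, ∀ b ∈ Y', a ≠ y₀ → b ≠ y₀ → ¬ lam a b)
    -- `F : X ⊸ Y` and `G : X' ⊸ Y'` with `F(x₀) = {y₀} = G(x₀)`
    (F G : W → Set Z)
    (hFY : ∀ x ∈ X, F x ⊆ Y) (hGY : ∀ x ∈ X', G x ⊆ Y')
    (hFx₀ : F x₀ = {y₀}) (hGx₀ : G x₀ = {y₀})
    -- `F` and `G` are connectivity preserving
    (hFcp : ∀ A : Set W, A ⊆ X → ConnectedIn κ A → ConnectedIn lam (mImage F A))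
    (hGcp : ∀ A : Set W, A ⊆ X' → ConnectedIn κ A → ConnectedIn lam (mImage G A))
    -- `H = F ∧ G` is the wedge function
    (H : W → Set Z)
    (hHF : ∀ a ∈ X, a ≠ x₀ → H a = F a)
    (hHG : ∀ a ∈ X', a ≠ x₀ → H a = G a)
    (hHx₀ : H x₀ = {y₀}) :
    ConnPreserving κ lam H :=
  wedge_connectivity_preserving_general κ lam hκs X X' x₀ hXunion hXinter hXwedge y₀ F G hFx₀ hGx₀
    hFcp hGcp H hHF hHG hHx₀
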